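/- Let ℒ be a complex vector field and suppose [ℒ̄,[ℒ,ℒ̄]] = a ℒ + b ℒ̄ + c [ℒ,ℒ̄] + d [ℒ,[ℒ,ℒ̄]] and [ℒ,[ℒ,[ℒ,ℒ̄]]] = e ℒ + f ℒ̄ + g [ℒ,ℒ̄] + h [ℒ,[ℒ,ℒ̄]] for smooth functions a,…,h. Then each of [ℒ,[ℒ̄,[ℒ,ℒ̄]]], [ℒ̄,[ℒ,[ℒ,ℒ̄]]], and [ℒ̄,[ℒ̄,[ℒ,ℒ̄]]] is a smooth-function linear combination of ℒ, ℒ̄, [ℒ,ℒ̄], [ℒ,[ℒ,ℒ̄]]. -/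

import Mathlib

/-- The complex-linear extension of a real-linear map `(Fin n → ℝ) →L[ℝ] (Fin n → ℂ)`
applied to a complex vector. -/
noncomputable def cdir {n : ℕ} (A : (Fin n → ℝ) →L[ℝ] (Fin n → ℂ)) (v : Fin n → ℂ) : Fin n → ℂ :=
  A (fun k => (v k).re) + Complex.I • A (fun k => (v k).im)

/-- Lie bracket of complexified vector fields (sections of `ℂ ⊗ Tℝ^n`), extended
`ℂ`-bilinearly from the Lie bracket of real vector fields. -/
noncomputable def lieC {n : ℕ} (V W : (Fin n → ℝ) → (Fin n → ℂ)) :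
    (Fin n → ℝ) → (Fin n → ℂ) :=
  fun x => cdir (fderiv ℝ W x) (V x) - cdir (fderiv ℝ V x) (W x)

/-- Pointwise conjugation of a complexified vector field. -/
def conjF {n : ℕ} (V : (Fin n → ℝ) → (Fin n → ℂ)) : (Fin n → ℝ) → (Fin n → ℂ) :=
  fun x k => starRingEnd ℂ (V x k)

/-- Membership in the `C^∞`-module generated by `ℒ, ℒ̄, [ℒ,ℒ̄], [ℒ,[ℒ,ℒ̄]]`. -/
def inSpan4 {n : ℕ} (L T : (Fin n → ℝ) → (Fin n → ℂ)) : Prop :=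
  ∃ p q r s : (Fin n → ℝ) → ℂ,
    ContDiff ℝ (⊤ : ℕ∞) p ∧ ContDiff ℝ (⊤ : ℕ∞) q ∧ ContDiff ℝ (⊤ : ℕ∞) r ∧ ContDiff ℝ (⊤ : ℕ∞) s ∧
    ∀ x, T x = p x • L x + q x • conjF L x + r x • lieC L (conjF L) x +
      s x • lieC L (lieC L (conjF L)) x

namespace Stmt15Aux

open VectorField

noncomputable section

variable {n : ℕ}

/-- coercion `ℝⁿ → ℂⁿ` as a continuous ℝ-linear map. -/
def iotaL (n : ℕ) : (Fin n → ℝ) →L[ℝ] (Fin n → ℂ) :=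
  ContinuousLinearMap.pi fun k => Complex.ofRealCLM.comp (ContinuousLinearMap.proj k)

/-- componentwise real part as a continuous ℝ-linear map. -/
def reL (n : ℕ) : (Fin n → ℂ) →L[ℝ] (Fin n → ℝ) :=
  ContinuousLinearMap.pi fun k => Complex.reCLM.comp (ContinuousLinearMap.proj k)

/-- componentwise imaginary part as a continuous ℝ-linear map. -/
def imL (n : ℕ) : (Fin n → ℂ) →L[ℝ] (Fin n → ℝ) :=
  ContinuousLinearMap.pi fun k => Complex.imCLM.comp (ContinuousLinearMap.proj k)

@[simp] lemma iotaL_apply (v : Fin n → ℝ) (k : Fin n) : iotaL n v k = (v k : ℂ) := rfl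
@[simp] lemma reL_apply (v : Fin n → ℂ) (k : Fin n) : reL n v k = (v k).re := rfl
@[simp] lemma imL_apply (v : Fin n → ℂ) (k : Fin n) : imL n v k = (v k).im := rfl

/-- real part of a complexified field -/
def reP (V : (Fin n → ℝ) → (Fin n → ℂ)) : (Fin n → ℝ) → (Fin n → ℝ) :=
  fun x => reL n (V x)

/-- imaginary part of a complexified field -/
def imP (V : (Fin n → ℝ) → (Fin n → ℂ)) : (Fin n → ℝ) → (Fin n → ℝ) :=
  fun x => imL n (V x)

lemma contDiff_reP {V : (Fin n → ℝ) → (Fin n → ℂ)} (hV : ContDiff ℝ (⊤ : ℕ∞) V) :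
    ContDiff ℝ (⊤ : ℕ∞) (reP V) := (reL n).contDiff.comp hV

lemma contDiff_imP {V : (Fin n → ℝ) → (Fin n → ℂ)} (hV : ContDiff ℝ (⊤ : ℕ∞) V) :
    ContDiff ℝ (⊤ : ℕ∞) (imP V) := (imL n).contDiff.comp hV

lemma diffAt {V : (Fin n → ℝ) → (Fin n → ℂ)} (hV : ContDiff ℝ (⊤ : ℕ∞) V) (x : Fin n → ℝ) :
    DifferentiableAt ℝ V x := (hV.differentiable (by simp)).differentiableAt

lemma diffAtR {V : (Fin n → ℝ) → (Fin n → ℝ)} (hV : ContDiff ℝ (⊤ : ℕ∞) V) (x : Fin n → ℝ) :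
    DifferentiableAt ℝ V x := (hV.differentiable (by simp)).differentiableAt

lemma diffAtC {f : (Fin n → ℝ) → ℂ} (hf : ContDiff ℝ (⊤ : ℕ∞) f) (x : Fin n → ℝ) :
    DifferentiableAt ℝ f x := (hf.differentiable (by simp)).differentiableAt

/-- cdir in terms of `reL`, `imL`. -/
lemma cdir_eq (A : (Fin n → ℝ) →L[ℝ] (Fin n → ℂ)) (v : Fin n → ℂ) :
    cdir A v = A (reL n v) + Complex.I • A (imL n v) := rfl

/-- decomposition of a derivative of a complexified field. -/
lemma fderiv_decomp {V : (Fin n → ℝ) → (Fin n → ℂ)} {x : Fin n → ℝ}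
    (hV : DifferentiableAt ℝ V x) (a : Fin n → ℝ) :
    fderiv ℝ V x a = iotaL n (fderiv ℝ (reP V) x a) + Complex.I • iotaL n (fderiv ℝ (imP V) x a) := by
  have h1 : fderiv ℝ (reP V) x = (reL n).comp (fderiv ℝ V x) :=
    ((reL n).hasFDerivAt.comp x hV.hasFDerivAt).fderiv
  have h2 : fderiv ℝ (imP V) x = (imL n).comp (fderiv ℝ V x) :=
    ((imL n).hasFDerivAt.comp x hV.hasFDerivAt).fderiv
  rw [h1, h2]
  funext k
  simp [Complex.ext_iff]

lemma cdir_add_A (A B : (Fin n → ℝ) →L[ℝ] (Fin n → ℂ)) (v : Fin n → ℂ) :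
    cdir (A + B) v = cdir A v + cdir B v := by
  simp only [cdir, ContinuousLinearMap.add_apply, smul_add]; abel

lemma cdir_neg_A (A : (Fin n → ℝ) →L[ℝ] (Fin n → ℂ)) (v : Fin n → ℂ) :
    cdir (-A) v = -cdir A v := by
  simp only [cdir, ContinuousLinearMap.neg_apply, smul_neg]; abel

lemma cdir_add_v (A : (Fin n → ℝ) →L[ℝ] (Fin n → ℂ)) (v w : Fin n → ℂ) :
    cdir A (v + w) = cdir A v + cdir A w := by
  rw [cdir_eq, cdir_eq, cdir_eq, map_add, map_add, map_add, map_add, smul_add]; abel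

lemma cdir_neg_v (A : (Fin n → ℝ) →L[ℝ] (Fin n → ℂ)) (v : Fin n → ℂ) :
    cdir A (-v) = -cdir A v := by
  rw [cdir_eq, cdir_eq, map_neg, map_neg, map_neg, map_neg, smul_neg]; abel

/-- `cdir A` is ℂ-linear. -/
lemma cdir_smul_v (A : (Fin n → ℝ) →L[ℝ] (Fin n → ℂ)) (c : ℂ) (v : Fin n → ℂ) :
    cdir A (c • v) = c • cdir A v := by
  have hre : reL n (c • v) = c.re • reL n v - c.im • imL n v := by
    funext k; simp [Complex.mul_re]
  have him : imL n (c • v) = c.re • imL n v + c.im • reL n v := by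
    funext k; simp [Complex.mul_im]
  rw [cdir_eq, cdir_eq, hre, him, map_sub, map_add, map_smul, map_smul, map_smul, map_smul]
  funext k
  simp only [Pi.add_apply, Pi.sub_apply, Pi.smul_apply, smul_eq_mul, Complex.real_smul,
    Complex.ext_iff, Complex.add_re, Complex.sub_re, Complex.mul_re, Complex.mul_im,
    Complex.add_im, Complex.sub_im, Complex.I_re, Complex.I_im, Complex.ofReal_re,
    Complex.ofReal_im]
  constructor <;> ring

lemma cdir_csmul_A (A : (Fin n → ℝ) →L[ℝ] (Fin n → ℂ)) (c : ℂ) (v : Fin n → ℂ) :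
    cdir (c • A) v = c • cdir A v := by
  rw [cdir_eq, cdir_eq, ContinuousLinearMap.smul_apply, ContinuousLinearMap.smul_apply,
    smul_add, smul_comm Complex.I c]

lemma cdir_smulRight (A : (Fin n → ℝ) →L[ℝ] ℂ) (w : Fin n → ℂ) (v : Fin n → ℂ) :
    cdir (A.smulRight w) v = (A (reL n v) + A (imL n v) * Complex.I) • w := by
  rw [cdir_eq, ContinuousLinearMap.smulRight_apply, ContinuousLinearMap.smulRight_apply,
    add_smul, smul_smul, mul_comm Complex.I]

/-- key decomposition of the complexified bracket into four real brackets. -/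
lemma lieC_decomp {V W : (Fin n → ℝ) → (Fin n → ℂ)} (hV : ContDiff ℝ (⊤ : ℕ∞) V)
    (hW : ContDiff ℝ (⊤ : ℕ∞) W) (x : Fin n → ℝ) :
    lieC V W x =
      iotaL n (lieBracket ℝ (reP V) (reP W) x - lieBracket ℝ (imP V) (imP W) x)
      + Complex.I • iotaL n (lieBracket ℝ (reP V) (imP W) x + lieBracket ℝ (imP V) (reP W) x) := by
  have eV : ∀ a, fderiv ℝ V x a
      = iotaL n (fderiv ℝ (reP V) x a) + Complex.I • iotaL n (fderiv ℝ (imP V) x a) :=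
    fderiv_decomp (diffAt hV x)
  have eW : ∀ a, fderiv ℝ W x a
      = iotaL n (fderiv ℝ (reP W) x a) + Complex.I • iotaL n (fderiv ℝ (imP W) x a) :=
    fderiv_decomp (diffAt hW x)
  show cdir (fderiv ℝ W x) (V x) - cdir (fderiv ℝ V x) (W x) = _
  rw [cdir_eq, cdir_eq, eV, eV, eW, eW, lieBracket_eq, lieBracket_eq, lieBracket_eq,
    lieBracket_eq]
  have h1 : reL n (V x) = reP V x := rfl
  have h2 : imL n (V x) = imP V x := rfl
  have h3 : reL n (W x) = reP W x := rfl
  have h4 : imL n (W x) = imP W x := rfl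
  rw [h1, h2, h3, h4]
  simp only [map_sub, map_add, smul_add, smul_sub, smul_smul, Complex.I_mul_I, neg_one_smul]
  module

lemma reL_mix (p q : Fin n → ℝ) :
    reL n (iotaL n p + Complex.I • iotaL n q) = p := by
  funext k; simp

lemma imL_mix (p q : Fin n → ℝ) :
    imL n (iotaL n p + Complex.I • iotaL n q) = q := by
  funext k; simp

lemma reP_lieC {V W : (Fin n → ℝ) → (Fin n → ℂ)} (hV : ContDiff ℝ (⊤ : ℕ∞) V)
    (hW : ContDiff ℝ (⊤ : ℕ∞) W) :
    reP (lieC V W) = lieBracket ℝ (reP V) (reP W) - lieBracket ℝ (imP V) (imP W) := by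
  funext x
  show reL n (lieC V W x) = _
  rw [lieC_decomp hV hW, reL_mix]
  rfl

lemma imP_lieC {V W : (Fin n → ℝ) → (Fin n → ℂ)} (hV : ContDiff ℝ (⊤ : ℕ∞) V)
    (hW : ContDiff ℝ (⊤ : ℕ∞) W) :
    imP (lieC V W) = lieBracket ℝ (reP V) (imP W) + lieBracket ℝ (imP V) (reP W) := by
  funext x
  show imL n (lieC V W x) = _
  rw [lieC_decomp hV hW, imL_mix]
  rfl

lemma contDiff_lieC {V W : (Fin n → ℝ) → (Fin n → ℂ)} (hV : ContDiff ℝ (⊤ : ℕ∞) V)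
    (hW : ContDiff ℝ (⊤ : ℕ∞) W) : ContDiff ℝ (⊤ : ℕ∞) (lieC V W) := by
  have hfun : lieC V W = fun x =>
      iotaL n ((lieBracket ℝ (reP V) (reP W) - lieBracket ℝ (imP V) (imP W)) x)
      + Complex.I • iotaL n ((lieBracket ℝ (reP V) (imP W) + lieBracket ℝ (imP V) (reP W)) x) :=
    funext fun x => lieC_decomp hV hW x
  rw [hfun]
  have h1 : ContDiff ℝ (⊤ : ℕ∞) (lieBracket ℝ (reP V) (reP W) - lieBracket ℝ (imP V) (imP W)) :=
    (((contDiff_reP hV).lieBracket_vectorField (contDiff_reP hW) (by simp)).sub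
      ((contDiff_imP hV).lieBracket_vectorField (contDiff_imP hW) (by simp)))
  have h2 : ContDiff ℝ (⊤ : ℕ∞) (lieBracket ℝ (reP V) (imP W) + lieBracket ℝ (imP V) (reP W)) :=
    (((contDiff_reP hV).lieBracket_vectorField (contDiff_imP hW) (by simp)).add
      ((contDiff_imP hV).lieBracket_vectorField (contDiff_reP hW) (by simp)))
  exact ((iotaL n).contDiff.comp h1).add (((iotaL n).contDiff.comp h2).const_smul Complex.I)

/-! pointwise bilinearity of the real bracket -/

lemma lb_add_right {p q r : (Fin n → ℝ) → (Fin n → ℝ)} (hq : ContDiff ℝ (⊤ : ℕ∞) q)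
    (hr : ContDiff ℝ (⊤ : ℕ∞) r) (x : Fin n → ℝ) :
    lieBracket ℝ p (q + r) x = lieBracket ℝ p q x + lieBracket ℝ p r x :=
  lieBracket_add_right (diffAtR hq x) (diffAtR hr x)

lemma lb_sub_right {p q r : (Fin n → ℝ) → (Fin n → ℝ)} (hq : ContDiff ℝ (⊤ : ℕ∞) q)
    (hr : ContDiff ℝ (⊤ : ℕ∞) r) (x : Fin n → ℝ) :
    lieBracket ℝ p (q - r) x = lieBracket ℝ p q x - lieBracket ℝ p r x := by
  simp only [lieBracket_eq]
  rw [show (q - r) = fun y => q y - r y from rfl, fderiv_fun_sub (diffAtR hq x) (diffAtR hr x)]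
  simp only [ContinuousLinearMap.sub_apply, Pi.sub_apply, map_sub]
  abel

lemma lb_add_left {p q r : (Fin n → ℝ) → (Fin n → ℝ)} (hp : ContDiff ℝ (⊤ : ℕ∞) p)
    (hq : ContDiff ℝ (⊤ : ℕ∞) q) (x : Fin n → ℝ) :
    lieBracket ℝ (p + q) r x = lieBracket ℝ p r x + lieBracket ℝ q r x :=
  lieBracket_add_left (diffAtR hp x) (diffAtR hq x)

lemma lb_sub_left {p q r : (Fin n → ℝ) → (Fin n → ℝ)} (hp : ContDiff ℝ (⊤ : ℕ∞) p)
    (hq : ContDiff ℝ (⊤ : ℕ∞) q) (x : Fin n → ℝ) :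
    lieBracket ℝ (p - q) r x = lieBracket ℝ p r x - lieBracket ℝ q r x := by
  simp only [lieBracket_eq]
  rw [show (p - q) = fun y => p y - q y from rfl, fderiv_fun_sub (diffAtR hp x) (diffAtR hq x)]
  simp only [ContinuousLinearMap.sub_apply, Pi.sub_apply, map_sub]
  abel

/-- Leibniz (Jacobi) identity for the complexified bracket. -/
lemma lieC_leibniz {U V W : (Fin n → ℝ) → (Fin n → ℂ)} (hU : ContDiff ℝ (⊤ : ℕ∞) U)
    (hV : ContDiff ℝ (⊤ : ℕ∞) V) (hW : ContDiff ℝ (⊤ : ℕ∞) W) (x : Fin n → ℝ) :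
    lieC U (lieC V W) x = lieC (lieC U V) W x + lieC V (lieC U W) x := by
  have cd2 : ∀ {p : (Fin n → ℝ) → (Fin n → ℝ)}, ContDiff ℝ (⊤ : ℕ∞) p → ContDiffAt ℝ 2 p x :=
    fun hp => (hp.of_le (WithTop.coe_le_coe.mpr (le_top : (2 : ℕ∞) ≤ ⊤))).contDiffAt
  have hur := contDiff_reP hU; have hui := contDiff_imP hU
  have hvr := contDiff_reP hV; have hvi := contDiff_imP hV
  have hwr := contDiff_reP hW; have hwi := contDiff_imP hW
  have cdlb : ∀ {p q : (Fin n → ℝ) → (Fin n → ℝ)}, ContDiff ℝ (⊤ : ℕ∞) p → ContDiff ℝ (⊤ : ℕ∞) q →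
      ContDiff ℝ (⊤ : ℕ∞) (lieBracket ℝ p q) :=
    fun hp hq => hp.lieBracket_vectorField hq (by simp)
  rw [lieC_decomp hU (contDiff_lieC hV hW), lieC_decomp (contDiff_lieC hU hV) hW,
    lieC_decomp hV (contDiff_lieC hU hW),
    reP_lieC hV hW, imP_lieC hV hW, reP_lieC hU hV, imP_lieC hU hV,
    reP_lieC hU hW, imP_lieC hU hW]
  simp only [lb_sub_right (cdlb hvr hwr) (cdlb hvi hwi), lb_add_right (cdlb hvr hwi) (cdlb hvi hwr),
    lb_sub_left (cdlb hur hvr) (cdlb hui hvi), lb_add_left (cdlb hur hvi) (cdlb hui hvr),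
    lb_sub_right (cdlb hur hwr) (cdlb hui hwi), lb_add_right (cdlb hur hwi) (cdlb hui hwr)]
  rw [leibniz_identity_lieBracket (by simp) (cd2 hur) (cd2 hvr) (cd2 hwr),
    leibniz_identity_lieBracket (by simp) (cd2 hur) (cd2 hvi) (cd2 hwi),
    leibniz_identity_lieBracket (by simp) (cd2 hui) (cd2 hvr) (cd2 hwi),
    leibniz_identity_lieBracket (by simp) (cd2 hui) (cd2 hvi) (cd2 hwr),
    leibniz_identity_lieBracket (by simp) (cd2 hur) (cd2 hvr) (cd2 hwi),
    leibniz_identity_lieBracket (by simp) (cd2 hur) (cd2 hvi) (cd2 hwr),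
    leibniz_identity_lieBracket (by simp) (cd2 hui) (cd2 hvr) (cd2 hwr),
    leibniz_identity_lieBracket (by simp) (cd2 hui) (cd2 hvi) (cd2 hwi)]
  simp only [map_add, map_sub, smul_add, smul_sub]
  abel

/-! module structure of `lieC` in the second argument -/

@[simp] lemma lieC_self (V : (Fin n → ℝ) → (Fin n → ℂ)) (x : Fin n → ℝ) :
    lieC V V x = 0 := by simp [lieC]

lemma lieC_swap (V W : (Fin n → ℝ) → (Fin n → ℂ)) (x : Fin n → ℝ) :
    lieC V W x = -lieC W V x := by
  simp only [lieC]; abel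

lemma lieC_neg_left (V W : (Fin n → ℝ) → (Fin n → ℂ)) (x : Fin n → ℝ) :
    lieC (fun y => -(V y)) W x = -lieC V W x := by
  simp only [lieC, fderiv_fun_neg, cdir_neg_A, cdir_neg_v]
  abel

lemma lieC_add_right {V W₁ W₂ : (Fin n → ℝ) → (Fin n → ℂ)} (hW₁ : ContDiff ℝ (⊤ : ℕ∞) W₁)
    (hW₂ : ContDiff ℝ (⊤ : ℕ∞) W₂) (x : Fin n → ℝ) :
    lieC V (fun y => W₁ y + W₂ y) x = lieC V W₁ x + lieC V W₂ x := by
  simp only [lieC]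
  rw [fderiv_fun_add (diffAt hW₁ x) (diffAt hW₂ x), cdir_add_A, cdir_add_v]
  abel

/-- complex directional derivative of a scalar function along a complexified field. -/
def dirD (V : (Fin n → ℝ) → (Fin n → ℂ)) (f : (Fin n → ℝ) → ℂ) (x : Fin n → ℝ) : ℂ :=
  fderiv ℝ f x (reP V x) + fderiv ℝ f x (imP V x) * Complex.I

lemma contDiff_dirD {V : (Fin n → ℝ) → (Fin n → ℂ)} {f : (Fin n → ℝ) → ℂ}
    (hV : ContDiff ℝ (⊤ : ℕ∞) V) (hf : ContDiff ℝ (⊤ : ℕ∞) f) :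
    ContDiff ℝ (⊤ : ℕ∞) (fun x => dirD V f x) := by
  have hd : ContDiff ℝ (⊤ : ℕ∞) (fderiv ℝ f) := hf.fderiv_right (by simp)
  exact (hd.clm_apply (contDiff_reP hV)).add
    ((hd.clm_apply (contDiff_imP hV)).mul contDiff_const)

lemma contDiff_csmul {f : (Fin n → ℝ) → ℂ} {W : (Fin n → ℝ) → (Fin n → ℂ)}
    (hf : ContDiff ℝ (⊤ : ℕ∞) f) (hW : ContDiff ℝ (⊤ : ℕ∞) W) :
    ContDiff ℝ (⊤ : ℕ∞) (fun y => f y • W y) := by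
  have h := ((ContinuousLinearMap.lsmul ℝ ℂ (E := Fin n → ℂ)).contDiff.comp hf).clm_apply hW
  simpa using h

lemma lieC_smul_right {V W : (Fin n → ℝ) → (Fin n → ℂ)} {f : (Fin n → ℝ) → ℂ}
    (hf : ContDiff ℝ (⊤ : ℕ∞) f) (hW : ContDiff ℝ (⊤ : ℕ∞) W) (x : Fin n → ℝ) :
    lieC V (fun y => f y • W y) x = dirD V f x • W x + f x • lieC V W x := by
  simp only [lieC]
  rw [fderiv_fun_smul (diffAtC hf x) (diffAt hW x), cdir_add_A, cdir_csmul_A, cdir_smulRight,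
    cdir_smul_v, smul_sub]
  show f x • cdir (fderiv ℝ W x) (V x) + dirD V f x • W x - f x • cdir (fderiv ℝ V x) (W x) = _
  abel

lemma lieC_combo {V L1 L2 L3 L4 : (Fin n → ℝ) → (Fin n → ℂ)} {a b c d : (Fin n → ℝ) → ℂ}
    (hL1 : ContDiff ℝ (⊤ : ℕ∞) L1) (hL2 : ContDiff ℝ (⊤ : ℕ∞) L2) (hL3 : ContDiff ℝ (⊤ : ℕ∞) L3)
    (hL4 : ContDiff ℝ (⊤ : ℕ∞) L4) (ha : ContDiff ℝ (⊤ : ℕ∞) a) (hb : ContDiff ℝ (⊤ : ℕ∞) b)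
    (hc : ContDiff ℝ (⊤ : ℕ∞) c) (hd : ContDiff ℝ (⊤ : ℕ∞) d) (x : Fin n → ℝ) :
    lieC V (fun y => a y • L1 y + b y • L2 y + c y • L3 y + d y • L4 y) x
      = dirD V a x • L1 x + a x • lieC V L1 x + (dirD V b x • L2 x + b x • lieC V L2 x)
        + (dirD V c x • L3 x + c x • lieC V L3 x)
        + (dirD V d x • L4 x + d x • lieC V L4 x) := by
  have c1 : ContDiff ℝ (⊤ : ℕ∞) (fun y => a y • L1 y) := contDiff_csmul ha hL1
  have c2 : ContDiff ℝ (⊤ : ℕ∞) (fun y => b y • L2 y) := contDiff_csmul hb hL2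
  have c3 : ContDiff ℝ (⊤ : ℕ∞) (fun y => c y • L3 y) := contDiff_csmul hc hL3
  have c4 : ContDiff ℝ (⊤ : ℕ∞) (fun y => d y • L4 y) := contDiff_csmul hd hL4
  calc lieC V (fun y => a y • L1 y + b y • L2 y + c y • L3 y + d y • L4 y) x
      = lieC V (fun y => a y • L1 y + b y • L2 y + c y • L3 y) x
        + lieC V (fun y => d y • L4 y) x := lieC_add_right ((c1.add c2).add c3) c4 x
    _ = lieC V (fun y => a y • L1 y + b y • L2 y) x + lieC V (fun y => c y • L3 y) x
        + lieC V (fun y => d y • L4 y) x := by rw [lieC_add_right (c1.add c2) c3 x]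
    _ = lieC V (fun y => a y • L1 y) x + lieC V (fun y => b y • L2 y) x
        + lieC V (fun y => c y • L3 y) x + lieC V (fun y => d y • L4 y) x := by
        rw [lieC_add_right c1 c2 x]
    _ = _ := by
        rw [lieC_smul_right ha hL1 x, lieC_smul_right hb hL2 x, lieC_smul_right hc hL3 x,
          lieC_smul_right hd hL4 x]

/-- conjugation as a continuous ℝ-linear map on `ℂⁿ`. -/
def conjL (n : ℕ) : (Fin n → ℂ) →L[ℝ] (Fin n → ℂ) :=
  ContinuousLinearMap.pi fun k =>
    (Complex.conjCLE.toContinuousLinearMap).comp (ContinuousLinearMap.proj k)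

lemma contDiff_conjF {V : (Fin n → ℝ) → (Fin n → ℂ)} (hV : ContDiff ℝ (⊤ : ℕ∞) V) :
    ContDiff ℝ (⊤ : ℕ∞) (conjF V) := by
  have : conjF V = fun x => conjL n (V x) := by
    funext x k; simp [conjF, conjL]
  rw [this]
  exact (conjL n).contDiff.comp hV

end

end Stmt15Aux

open Stmt15Aux

/-- Let `ℒ` be a smooth complex vector field with
`[ℒ̄,[ℒ,ℒ̄]] = a ℒ + b ℒ̄ + c [ℒ,ℒ̄] + d [ℒ,[ℒ,ℒ̄]]` and
`[ℒ,[ℒ,[ℒ,ℒ̄]]] = e ℒ + f ℒ̄ + g [ℒ,ℒ̄] + h [ℒ,[ℒ,ℒ̄]]` for smooth `a,…,h`.  Then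
`[ℒ,[ℒ̄,[ℒ,ℒ̄]]]`, `[ℒ̄,[ℒ,[ℒ,ℒ̄]]]` and `[ℒ̄,[ℒ̄,[ℒ,ℒ̄]]]` are each a smooth-function
linear combination of `ℒ, ℒ̄, [ℒ,ℒ̄], [ℒ,[ℒ,ℒ̄]]`. -/
theorem stmt_15 (n : ℕ) (L : (Fin n → ℝ) → (Fin n → ℂ)) (hL : ContDiff ℝ (⊤ : ℕ∞) L)
    (a b c d e f g h : (Fin n → ℝ) → ℂ)
    (ha : ContDiff ℝ (⊤ : ℕ∞) a) (hb : ContDiff ℝ (⊤ : ℕ∞) b) (hc : ContDiff ℝ (⊤ : ℕ∞) c)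
    (hd : ContDiff ℝ (⊤ : ℕ∞) d) (he : ContDiff ℝ (⊤ : ℕ∞) e) (hf : ContDiff ℝ (⊤ : ℕ∞) f)
    (hg : ContDiff ℝ (⊤ : ℕ∞) g) (hh : ContDiff ℝ (⊤ : ℕ∞) h)
    (hyp1 : ∀ x, lieC (conjF L) (lieC L (conjF L)) x =
      a x • L x + b x • conjF L x + c x • lieC L (conjF L) x +
        d x • lieC L (lieC L (conjF L)) x)
    (hyp2 : ∀ x, lieC L (lieC L (lieC L (conjF L))) x =
      e x • L x + f x • conjF L x + g x • lieC L (conjF L) x +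
        h x • lieC L (lieC L (conjF L)) x) :
    inSpan4 L (lieC L (lieC (conjF L) (lieC L (conjF L)))) ∧
    inSpan4 L (lieC (conjF L) (lieC L (lieC L (conjF L)))) ∧
    inSpan4 L (lieC (conjF L) (lieC (conjF L) (lieC L (conjF L)))) := by
  have hB : ContDiff ℝ (⊤ : ℕ∞) (conjF L) := contDiff_conjF hL
  have hM : ContDiff ℝ (⊤ : ℕ∞) (lieC L (conjF L)) := contDiff_lieC hL hB
  have hK : ContDiff ℝ (⊤ : ℕ∞) (lieC L (lieC L (conjF L))) := contDiff_lieC hL hM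
  have h1fun : lieC (conjF L) (lieC L (conjF L)) = fun y =>
      a y • L y + b y • conjF L y + c y • lieC L (conjF L) y +
        d y • lieC L (lieC L (conjF L)) y := funext hyp1
  -- coefficients for goal 1 (and goal 2)
  set p1 : (Fin n → ℝ) → ℂ := fun x => dirD L a x + d x * e x with hp1def
  set q1 : (Fin n → ℝ) → ℂ := fun x => dirD L b x + d x * f x with hq1def
  set r1 : (Fin n → ℝ) → ℂ := fun x => b x + dirD L c x + d x * g x with hr1def
  set s1 : (Fin n → ℝ) → ℂ := fun x => c x + dirD L d x + d x * h x with hs1def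
  have hp1 : ContDiff ℝ (⊤ : ℕ∞) p1 := (contDiff_dirD hL ha).add (hd.mul he)
  have hq1 : ContDiff ℝ (⊤ : ℕ∞) q1 := (contDiff_dirD hL hb).add (hd.mul hf)
  have hr1 : ContDiff ℝ (⊤ : ℕ∞) r1 := (hb.add (contDiff_dirD hL hc)).add (hd.mul hg)
  have hs1 : ContDiff ℝ (⊤ : ℕ∞) s1 := (hc.add (contDiff_dirD hL hd)).add (hd.mul hh)
  have key1 : ∀ x, lieC L (lieC (conjF L) (lieC L (conjF L))) x =
      p1 x • L x + q1 x • conjF L x + r1 x • lieC L (conjF L) x +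
        s1 x • lieC L (lieC L (conjF L)) x := by
    intro x
    rw [h1fun, lieC_combo hL hB hM hK ha hb hc hd x, hyp2 x, lieC_self,
      hp1def, hq1def, hr1def, hs1def]
    module
  -- goal 2 equals goal 1 via the Leibniz identity
  have key2 : ∀ x, lieC (conjF L) (lieC L (lieC L (conjF L))) x =
      p1 x • L x + q1 x • conjF L x + r1 x • lieC L (conjF L) x +
        s1 x • lieC L (lieC L (conjF L)) x := by
    intro x
    rw [lieC_leibniz hB hL hM x]
    have hswap : lieC (conjF L) L = fun y => -(lieC L (conjF L) y) :=
      funext fun y => lieC_swap (conjF L) L y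
    rw [hswap, lieC_neg_left, lieC_self, neg_zero, zero_add, key1 x]
  -- goal 3
  have key3 : ∀ x, lieC (conjF L) (lieC (conjF L) (lieC L (conjF L))) x =
      (fun x => dirD (conjF L) a x + c x * a x + d x * p1 x) x • L x +
      (fun x => dirD (conjF L) b x + c x * b x + d x * q1 x) x • conjF L x +
      (fun x => dirD (conjF L) c x - a x + c x * c x + d x * r1 x) x • lieC L (conjF L) x +
      (fun x => dirD (conjF L) d x + c x * d x + d x * s1 x) x •
        lieC L (lieC L (conjF L)) x := by
    intro x
    rw [h1fun, lieC_combo hL hB hM hK ha hb hc hd x, lieC_self,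
      lieC_swap (conjF L) L x, hyp1 x, key2 x]
    simp only [hp1def, hq1def, hr1def, hs1def]
    module
  refine ⟨⟨p1, q1, r1, s1, hp1, hq1, hr1, hs1, key1⟩,
    ⟨p1, q1, r1, s1, hp1, hq1, hr1, hs1, key2⟩,
    ⟨_, _, _, _, ?_, ?_, ?_, ?_, key3⟩⟩
  · exact ((contDiff_dirD hB ha).add (hc.mul ha)).add (hd.mul hp1)
  · exact ((contDiff_dirD hB hb).add (hc.mul hb)).add (hd.mul hq1)
  · exact (((contDiff_dirD hB hc).sub ha).add (hc.mul hc)).add (hd.mul hr1)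
  · exact ((contDiff_dirD hB hd).add (hc.mul hd)).add (hd.mul hs1)
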